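/- arXiv:2501.12257 — 6 statements merged into one kernel-verified Lean document; each statement's English description precedes it below -/
import Mathlib

section
/- Let C_β, C_δ, C_R, α, x be positive reals. Then ∫_x^{∞} ( ∫_x^{u} (C_β·s^{α−1})/(C_R·s^{α}) ds ) · ((C_δ·u^{α−1})/(C_R·u^{α})) · exp( − ∫_x^{u} (C_δ·τ^{α−1})/(C_R·τ^{α}) dτ ) du = C_β / C_δ. In particular the value does not depend on x, α or C_R. -/
/-!
On `s > 0` both rates divided by the gain collapse to multiples of `1/s`, so with
`L u = log u - log x` the integrand is `(Cβ/C_R) · L u · (c/u) · exp (-c L u)` where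
`c = Cδ/C_R`. After the substitution `t = L u` this is `Cβ/C_R` times the mean `1/c` of an
exponential law; here it is evaluated directly from the antiderivative
`-(c L u + 1) exp (-c L u) / c`, which tends to `0` at infinity.
-/

open MeasureTheory Filter Real

lemma mul_rpow_sub_one_div_mul_rpow {s : ℝ} (hs : 0 < s) (C D α : ℝ) :
    C * s ^ (α - 1) / (D * s ^ α) = C / D * s⁻¹ := by
  rw [sub_eq_add_neg, rpow_add hs, rpow_neg_one]
  field_simp

lemma intervalIntegral_mul_rpow_sub_one_div_mul_rpow {x u : ℝ} (hx : 0 < x) (hxu : x ≤ u)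
    (C D α : ℝ) :
    ∫ s in x..u, C * s ^ (α - 1) / (D * s ^ α) = C / D * (log u - log x) := by
  have hu : 0 < u := hx.trans_le hxu
  rw [intervalIntegral.integral_congr (g := fun s => C / D * s⁻¹),
    intervalIntegral.integral_const_mul, integral_inv (Set.notMem_uIcc_of_lt hx hu),
    log_div hu.ne' hx.ne']
  intro s hs
  rw [Set.uIcc_of_le hxu] at hs
  exact mul_rpow_sub_one_div_mul_rpow (hx.trans_le hs.1) C D α

lemma tendsto_add_one_mul_exp_neg_atTop :
    Tendsto (fun t : ℝ => (t + 1) * exp (-t)) atTop (nhds 0) := by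
  have h := (tendsto_pow_mul_exp_neg_atTop_nhds_zero 1).add tendsto_exp_neg_atTop_nhds_zero
  simp only [pow_one, add_zero] at h
  convert h using 2 with t
  ring

lemma hasDerivAt_log_sub_mul_exp_antiderivative {c x u : ℝ} (hc : c ≠ 0) (hu : 0 < u) :
    HasDerivAt (fun u => -((c * (log u - log x) + 1) * exp (-(c * (log u - log x)))) / c)
      ((log u - log x) * (c * u⁻¹) * exp (-(c * (log u - log x)))) u := by
  have hL : HasDerivAt (fun u => c * (log u - log x)) (c * u⁻¹) u :=
    ((hasDerivAt_log hu.ne').sub_const (log x)).const_mul c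
  have hE : HasDerivAt (fun u => exp (-(c * (log u - log x))))
      (exp (-(c * (log u - log x))) * -(c * u⁻¹)) u := hL.neg.exp
  refine (((hL.add_const 1).mul hE).neg.div_const c).congr_deriv ?_
  field_simp
  ring

lemma integral_Ioi_log_sub_mul_exp {c x : ℝ} (hc : 0 < c) (hx : 0 < x) :
    ∫ u in Set.Ioi x, (log u - log x) * (c * u⁻¹) * exp (-(c * (log u - log x))) = 1 / c := by
  have hnonneg : ∀ u ∈ Set.Ioi x,
      0 ≤ (log u - log x) * (c * u⁻¹) * exp (-(c * (log u - log x))) := fun u hu => by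
    have hL : 0 ≤ log u - log x := sub_nonneg.2 (log_le_log hx (le_of_lt hu))
    have := inv_pos.2 (hx.trans hu)
    positivity
  have hL : Tendsto (fun u => c * (log u - log x)) atTop atTop :=
    (tendsto_log_atTop.atTop_add tendsto_const_nhds).const_mul_atTop hc
  have hlim := (tendsto_add_one_mul_exp_neg_atTop.comp hL).neg.div_const c
  rw [neg_zero, zero_div] at hlim
  rw [integral_Ioi_of_hasDerivAt_of_nonneg'
    (fun u hu => hasDerivAt_log_sub_mul_exp_antiderivative hc.ne' (hx.trans_le hu)) hnonneg hlim]
  simp [neg_div]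

theorem stmt8_general (Cβ Cδ CR α x : ℝ)
    (hCδ : 0 < Cδ) (hCR : 0 < CR) (hx : 0 < x) :
    (∫ u in Set.Ioi x,
        (∫ s in x..u, Cβ * s ^ (α - 1) / (CR * s ^ α)) *
          (Cδ * u ^ (α - 1) / (CR * u ^ α)) *
          Real.exp (-(∫ τ in x..u, Cδ * τ ^ (α - 1) / (CR * τ ^ α)))) = Cβ / Cδ := by
  have hc : 0 < Cδ / CR := div_pos hCδ hCR
  calc _ = ∫ u in Set.Ioi x, Cβ / CR *
        ((log u - log x) * (Cδ / CR * u⁻¹) * exp (-(Cδ / CR * (log u - log x)))) := by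
        refine setIntegral_congr_fun measurableSet_Ioi fun u (hu : x < u) => ?_
        simp only [intervalIntegral_mul_rpow_sub_one_div_mul_rpow hx hu.le,
          mul_rpow_sub_one_div_mul_rpow (hx.trans hu)]
        ring
    _ = Cβ / Cδ := by
        rw [integral_const_mul, integral_Ioi_log_sub_mul_exp hc hx]
        field_simp

/-- With `β = δ = α−1`, `γ = α` and energy gain `g(s) = C_R s^α`, the expected number of
birth jumps of an individual started from energy `x` with no energy loss at births equals
`C_β / C_δ`, independently of `x`, `α` and `C_R`.  (Lemma 6.14.) -/
theorem stmt8 (Cβ Cδ CR α x : ℝ)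
    (hCβ : 0 < Cβ) (hCδ : 0 < Cδ) (hCR : 0 < CR) (hα : 0 < α) (hx : 0 < x) :
    (∫ u in Set.Ioi x,
        (∫ s in x..u, Cβ * s ^ (α - 1) / (CR * s ^ α)) *
          (Cδ * u ^ (α - 1) / (CR * u ^ α)) *
          Real.exp (-(∫ τ in x..u, Cδ * τ ^ (α - 1) / (CR * τ ^ α)))) = Cβ / Cδ :=
  stmt8_general Cβ Cδ CR α x hCδ hCR hx
end

section
/- For every integer k ≥ 0 and every real ξ > 0 with ξ ≥ k·x₀, one has K^{k}𝟏(ξ) = (C_β/(C_β+C_δ))^{k}. -/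
open MeasureTheory

/-- Birth rate in the allometric setting with `β = α−1`: `b(x) = C_β x^{α−1}` for
`x > x₀` and `0` otherwise. -/
noncomputable def birthRate (x₀ Cβ α : ℝ) (x : ℝ) : ℝ :=
  if x₀ < x then Cβ * x ^ (α - 1) else 0

/-- Death rate `d(x) = C_δ x^{α−1}`. -/
noncomputable def deathRate (Cδ α : ℝ) (x : ℝ) : ℝ := Cδ * x ^ (α - 1)

/-- Net energy gain `g(x) = C_R x^α`. -/
noncomputable def energyGain (CR α : ℝ) (x : ℝ) : ℝ := CR * x ^ α

/-- The operator `K`: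
`K f(ξ) = ∫_ξ^∞ (b(x)/g(x)) exp(−∫_ξ^x (b+d)/g) f(x−x₀) dx`. -/
noncomputable def Kop (x₀ Cβ Cδ CR α : ℝ) (f : ℝ → ℝ) (ξ : ℝ) : ℝ :=
  ∫ x in Set.Ioi ξ,
    birthRate x₀ Cβ α x / energyGain CR α x *
      Real.exp
        (-(∫ τ in ξ..x,
            (birthRate x₀ Cβ α τ + deathRate Cδ α τ) / energyGain CR α τ)) *
      f (x - x₀)

/-!
Above `x₀`, both `b/g` and `(b+d)/g` are constant multiples of `1/x`, so the survival factor
`exp(−∫_ξ^x (b+d)/g)` equals `(x/ξ)^{−p}` with `p = (C_β+C_δ)/C_R`, and the jump density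
`p x⁻¹ (x/ξ)^{−p}` has total mass `1`. Hence `K` maps a function that is constant on `(ξ−x₀, ∞)`
to `C_β/(C_β+C_δ)` times that constant at `ξ`, and `ξ ≥ k x₀` is exactly what keeps every
intermediate argument `x − x₀` above `(k−1) x₀`.
-/

open Real Set MeasureTheory

lemma rpow_sub_one_div_rpow {x : ℝ} (hx : 0 < x) (α : ℝ) : x ^ (α - 1) / x ^ α = x⁻¹ := by
  rw [rpow_sub_one hx.ne', div_div_cancel_left' (rpow_pos_of_pos hx α).ne']

lemma integral_Ioi_inv_mul_exp_neg_mul_log {p ξ : ℝ} (hp : 0 < p) (hξ : 0 < ξ) :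
    ∫ x in Ioi ξ, x⁻¹ * exp (-(p * log (x / ξ))) = p⁻¹ := by
  have hpow : EqOn (fun x => x⁻¹ * exp (-(p * log (x / ξ)))) (fun x => ξ ^ p * x ^ (-1 - p))
      (Ioi ξ) := by
    intro x (hx : ξ < x)
    have hx0 : 0 < x := hξ.trans hx
    beta_reduce
    rw [show -(p * log (x / ξ)) = log (x / ξ) * -p by ring, ← rpow_def_of_pos (div_pos hx0 hξ),
      div_rpow hx0.le hξ.le, rpow_neg hξ.le, div_inv_eq_mul, sub_eq_add_neg, rpow_add hx0,
      rpow_neg_one]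
    ring
  rw [setIntegral_congr_fun measurableSet_Ioi hpow, integral_const_mul,
    integral_Ioi_rpow_of_lt (by linarith) hξ, show -1 - p + 1 = -p by ring, rpow_neg hξ.le]
  field_simp [(rpow_pos_of_pos hξ p).ne']

section rates

variable {x₀ Cβ Cδ CR α x : ℝ}

lemma birthRate_div_energyGain (hx₀x : x₀ < x) (hx : 0 < x) :
    birthRate x₀ Cβ α x / energyGain CR α x = Cβ / CR * x⁻¹ := by
  rw [birthRate, energyGain, if_pos hx₀x, mul_div_mul_comm, rpow_sub_one_div_rpow hx]

lemma birthRate_add_deathRate_div_energyGain (hx₀x : x₀ < x) (hx : 0 < x) :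
    (birthRate x₀ Cβ α x + deathRate Cδ α x) / energyGain CR α x = (Cβ + Cδ) / CR * x⁻¹ := by
  rw [birthRate, deathRate, energyGain, if_pos hx₀x, ← add_mul, mul_div_mul_comm,
    rpow_sub_one_div_rpow hx]

lemma integral_birthRate_add_deathRate_div_energyGain {ξ : ℝ} (hξ : 0 < ξ) (hx₀ξ : x₀ ≤ ξ)
    (hξx : ξ ≤ x) :
    ∫ τ in ξ..x, (birthRate x₀ Cβ α τ + deathRate Cδ α τ) / energyGain CR α τ
      = (Cβ + Cδ) / CR * log (x / ξ) := by
  -- the integrands differ at `τ = ξ` when `ξ = x₀`, so compare them on `Ioc ξ x`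
  rw [intervalIntegral.integral_of_le hξx,
    setIntegral_congr_fun measurableSet_Ioc (g := fun τ => (Cβ + Cδ) / CR * τ⁻¹)
      fun τ hτ => birthRate_add_deathRate_div_energyGain (hx₀ξ.trans_lt hτ.1) (hξ.trans hτ.1),
    integral_const_mul, ← intervalIntegral.integral_of_le hξx,
    integral_inv_of_pos hξ (hξ.trans_le hξx)]

lemma Kop_eq_mul_of_eqOn {f : ℝ → ℝ} {c ξ : ℝ} (hξ : 0 < ξ) (hx₀ξ : x₀ ≤ ξ)
    (hCβδ : 0 < Cβ + Cδ) (hCR : 0 < CR) (hf : ∀ x ∈ Ioi ξ, f (x - x₀) = c) :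
    Kop x₀ Cβ Cδ CR α f ξ = Cβ / (Cβ + Cδ) * c := by
  set p := (Cβ + Cδ) / CR
  have hintegrand : EqOn
      (fun x => birthRate x₀ Cβ α x / energyGain CR α x *
        exp (-∫ τ in ξ..x, (birthRate x₀ Cβ α τ + deathRate Cδ α τ) / energyGain CR α τ) *
        f (x - x₀))
      (fun x => Cβ / CR * c * (x⁻¹ * exp (-(p * log (x / ξ))))) (Ioi ξ) := by
    intro x (hx : ξ < x)
    simp only
    rw [birthRate_div_energyGain (hx₀ξ.trans_lt hx) (hξ.trans hx),
      integral_birthRate_add_deathRate_div_energyGain hξ hx₀ξ hx.le, hf x hx]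
    ring
  rw [Kop, setIntegral_congr_fun measurableSet_Ioi hintegrand, integral_const_mul,
    integral_Ioi_inv_mul_exp_neg_mul_log (div_pos hCβδ hCR) hξ]
  field_simp

end rates

theorem stmt10_general (α x₀ Cβ Cδ CR : ℝ)
    (hCβ : 0 < Cβ) (hCδ : 0 < Cδ) (hCR : 0 < CR) :
    ∀ k : ℕ, ∀ ξ : ℝ, 0 < ξ → (k : ℝ) * x₀ ≤ ξ →
      (Kop x₀ Cβ Cδ CR α)^[k] (fun _ => 1) ξ = (Cβ / (Cβ + Cδ)) ^ k := by
  intro k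
  induction k with
  | zero => simp
  | succ k ih =>
    intro ξ hξ hkξ
    push_cast at hkξ
    have hx₀ξ : x₀ ≤ ξ := by
      rcases le_or_gt x₀ 0 with hx₀ | hx₀
      · linarith
      · nlinarith [mul_nonneg k.cast_nonneg hx₀.le]
    rw [Function.iterate_succ_apply', pow_succ']
    refine Kop_eq_mul_of_eqOn hξ hx₀ξ (by positivity) hCR fun x (hx : ξ < x) => ih _ ?_ ?_
    all_goals linarith

/-- Lemma 6.16: for every `k ≥ 0` and every `ξ > 0` with `ξ ≥ k x₀`,
`K^k 𝟏(ξ) = (C_β/(C_β+C_δ))^k`. -/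
theorem stmt10 (α x₀ Cβ Cδ CR : ℝ)
    (hα0 : 0 < α) (hα1 : α ≤ 1) (hx₀ : 0 < x₀)
    (hCβ : 0 < Cβ) (hCδ : 0 < Cδ) (hCR : 0 < CR) :
    ∀ k : ℕ, ∀ ξ : ℝ, 0 < ξ → (k : ℝ) * x₀ ≤ ξ →
      (Kop x₀ Cβ Cδ CR α)^[k] (fun _ => 1) ξ = (Cβ / (Cβ + Cδ)) ^ k :=
  stmt10_general α x₀ Cβ Cδ CR hCβ hCδ hCR
end

section
/- For every integer k ≥ 1 and every real ξ > 0, one has K^{k}𝟏(ξ) ≤ (C_β/(C_β+C_δ))^{k}. -/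
open MeasureTheory

/-!
Beyond `m = max ξ x₀` the hazard `(b + d) / g` equals `s / τ` with `s = (C_β + C_δ) / C_R`, and it is
nonnegative before, so `exp (-∫_ξ^x (b + d) / g) ≤ (m / x) ^ s`. Since `b` vanishes below `x₀` and
`b / g = (C_β / C_R) / x` above it, for `0 ≤ f ≤ c` on `(0, ∞)` the integrand of `K f (ξ)` is at most
`(C_β / C_R) c m ^ s x ^ (-(s + 1))` on `(m, ∞)` and zero on `(ξ, m]`, whose integral is
`(C_β / C_R) c / s = C_β / (C_β + C_δ) · c`. Iterating from `𝟏` gives the bound.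
-/

open Set Real

lemma integral_Ioi_rpow_mul_rpow_neg_add_one {m s : ℝ} (hm : 0 < m) (hs : 0 < s) :
    ∫ x in Ioi m, m ^ s * x ^ (-(s + 1)) = s⁻¹ := by
  rw [integral_const_mul, integral_Ioi_rpow_of_lt (by linarith) hm,
    show -(s + 1) + 1 = -s by ring, rpow_neg hm.le]
  field_simp [(rpow_pos_of_pos hm s).ne']

lemma mul_rpow_sub_one_div_mul_rpow_s12 (C CR α : ℝ) {τ : ℝ} (hτ : 0 < τ) (hCR : CR ≠ 0) :
    C * τ ^ (α - 1) / (CR * τ ^ α) = C / CR * τ⁻¹ := by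
  rw [rpow_sub hτ, rpow_one]
  field_simp [(rpow_pos_of_pos hτ α).ne']

/-- The integrand in the exponent of `Kop`, which matches it up to unfolding. -/
noncomputable def hazardRate (x₀ Cβ Cδ CR α : ℝ) (τ : ℝ) : ℝ :=
  (birthRate x₀ Cβ α τ + deathRate Cδ α τ) / energyGain CR α τ

section Allometric

variable {α x₀ Cβ Cδ CR : ℝ}

lemma birthRate_of_le {x : ℝ} (hx : x ≤ x₀) : birthRate x₀ Cβ α x = 0 :=
  if_neg hx.not_gt

lemma birthRate_div_energyGain_of_lt {x : ℝ} (hx : 0 < x) (hx₀x : x₀ < x) (hCR : CR ≠ 0) :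
    birthRate x₀ Cβ α x / energyGain CR α x = Cβ / CR * x⁻¹ := by
  rw [birthRate, if_pos hx₀x, energyGain, mul_rpow_sub_one_div_mul_rpow_s12 _ _ _ hx hCR]

lemma birthRate_div_energyGain_nonneg (hCβ : 0 ≤ Cβ) (hCR : 0 ≤ CR) {x : ℝ} (hx : 0 < x) :
    0 ≤ birthRate x₀ Cβ α x / energyGain CR α x := by
  unfold birthRate energyGain
  split_ifs <;> positivity

lemma hazardRate_nonneg (hCβ : 0 ≤ Cβ) (hCδ : 0 ≤ Cδ) (hCR : 0 ≤ CR) {τ : ℝ} (hτ : 0 < τ) :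
    0 ≤ hazardRate x₀ Cβ Cδ CR α τ := by
  unfold hazardRate birthRate deathRate energyGain
  split_ifs <;> positivity

lemma hazardRate_of_lt {τ : ℝ} (hτ : 0 < τ) (hx₀τ : x₀ < τ) (hCR : CR ≠ 0) :
    hazardRate x₀ Cβ Cδ CR α τ = (Cβ + Cδ) / CR * τ⁻¹ := by
  rw [hazardRate, birthRate, if_pos hx₀τ, deathRate, energyGain, ← add_mul,
    mul_rpow_sub_one_div_mul_rpow_s12 _ _ _ hτ hCR]

lemma hazardRate_le (hCβ : 0 ≤ Cβ) (hCR : 0 < CR) {τ : ℝ} (hτ : 0 < τ) :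
    hazardRate x₀ Cβ Cδ CR α τ ≤ (Cβ + Cδ) / CR * τ⁻¹ := by
  rcases lt_or_ge x₀ τ with hx₀τ | hτx₀
  · exact (hazardRate_of_lt hτ hx₀τ hCR.ne').le
  · rw [hazardRate, birthRate_of_le hτx₀, zero_add, deathRate, energyGain,
      mul_rpow_sub_one_div_mul_rpow_s12 _ _ _ hτ hCR.ne']
    gcongr
    linarith

lemma measurable_hazardRate : Measurable (hazardRate x₀ Cβ Cδ CR α) := by
  unfold hazardRate birthRate deathRate energyGain
  exact ((Measurable.ite measurableSet_Ioi (by fun_prop) measurable_const).add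
    (by fun_prop)).div (by fun_prop)

lemma intervalIntegrable_hazardRate (hCβ : 0 ≤ Cβ) (hCδ : 0 ≤ Cδ) (hCR : 0 < CR) {a b : ℝ}
    (ha : 0 < a) (hb : 0 < b) : IntervalIntegrable (hazardRate x₀ Cβ Cδ CR α) volume a b := by
  have hpos : ∀ τ ∈ uIcc a b, 0 < τ := fun τ hτ => (lt_min ha hb).trans_le hτ.1
  have hbound : IntervalIntegrable (fun τ => (Cβ + Cδ) / CR * τ⁻¹) volume a b :=
    (continuousOn_const.mul (continuousOn_inv₀.mono fun τ hτ => (hpos τ hτ).ne')).intervalIntegrable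
  refine hbound.mono_fun measurable_hazardRate.aestronglyMeasurable.restrict ?_
  refine (ae_restrict_iff' measurableSet_uIoc).mpr (Filter.Eventually.of_forall fun τ hτ => ?_)
  have hτ0 := hpos τ (uIoc_subset_uIcc hτ)
  dsimp only
  rw [norm_of_nonneg (hazardRate_nonneg hCβ hCδ hCR.le hτ0), norm_of_nonneg (by positivity)]
  exact hazardRate_le hCβ hCR hτ0

lemma mul_log_sub_log_le_integral_hazardRate (hCβ : 0 ≤ Cβ) (hCδ : 0 ≤ Cδ) (hCR : 0 < CR)
    {ξ x : ℝ} (hξ : 0 < ξ) (hx : max ξ x₀ ≤ x) :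
    (Cβ + Cδ) / CR * (log x - log (max ξ x₀)) ≤ ∫ τ in ξ..x, hazardRate x₀ Cβ Cδ CR α τ := by
  set m := max ξ x₀
  have hm : 0 < m := lt_max_of_lt_left hξ
  have hx0 : 0 < x := hm.trans_le hx
  rw [← intervalIntegral.integral_add_adjacent_intervals
    (intervalIntegrable_hazardRate hCβ hCδ hCR hξ hm)
    (intervalIntegrable_hazardRate hCβ hCδ hCR hm hx0)]
  have head : 0 ≤ ∫ τ in ξ..m, hazardRate x₀ Cβ Cδ CR α τ :=
    intervalIntegral.integral_nonneg (le_max_left _ _) fun τ hτ =>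
      hazardRate_nonneg hCβ hCδ hCR.le (hξ.trans_le hτ.1)
  have tail : ∫ τ in m..x, hazardRate x₀ Cβ Cδ CR α τ = (Cβ + Cδ) / CR * (log x - log m) := by
    rw [intervalIntegral.integral_congr_ae (g := fun τ => (Cβ + Cδ) / CR * τ⁻¹), 
      intervalIntegral.integral_const_mul, integral_inv_of_pos hm hx0, log_div hx0.ne' hm.ne']
    refine Filter.Eventually.of_forall fun τ hτ => ?_
    rw [uIoc_of_le hx] at hτ
    exact hazardRate_of_lt (hm.trans hτ.1) ((le_max_right _ _).trans_lt hτ.1) hCR.ne'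
  linarith

lemma exp_neg_integral_hazardRate_le (hCβ : 0 ≤ Cβ) (hCδ : 0 ≤ Cδ) (hCR : 0 < CR)
    {ξ x : ℝ} (hξ : 0 < ξ) (hx : max ξ x₀ ≤ x) :
    exp (-∫ τ in ξ..x, hazardRate x₀ Cβ Cδ CR α τ) ≤
      max ξ x₀ ^ ((Cβ + Cδ) / CR) * x ^ (-((Cβ + Cδ) / CR)) := by
  have hm : 0 < max ξ x₀ := lt_max_of_lt_left hξ
  rw [rpow_def_of_pos hm, rpow_def_of_pos (hm.trans_le hx), ← exp_add]
  gcongr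
  linarith [mul_log_sub_log_le_integral_hazardRate (α := α) hCβ hCδ hCR hξ hx]

variable {f : ℝ → ℝ} {ξ : ℝ}

lemma Kop_integrand_nonneg (hCβ : 0 ≤ Cβ) (hCR : 0 ≤ CR) (hf : ∀ y, 0 < y → 0 ≤ f y)
    (hξ : 0 < ξ) {x : ℝ} (hx : ξ < x) :
    0 ≤ birthRate x₀ Cβ α x / energyGain CR α x *
      exp (-∫ τ in ξ..x, hazardRate x₀ Cβ Cδ CR α τ) * f (x - x₀) := by
  rcases le_or_gt x x₀ with hxx₀ | hx₀x
  · simp [birthRate_of_le hxx₀]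
  · exact mul_nonneg (mul_nonneg (birthRate_div_energyGain_nonneg hCβ hCR (hξ.trans hx))
      (exp_nonneg _)) (hf _ (sub_pos.2 hx₀x))

lemma Kop_nonneg (hCβ : 0 ≤ Cβ) (hCR : 0 ≤ CR) (hf : ∀ y, 0 < y → 0 ≤ f y) (hξ : 0 < ξ) :
    0 ≤ Kop x₀ Cβ Cδ CR α f ξ :=
  setIntegral_nonneg measurableSet_Ioi fun _ hx => Kop_integrand_nonneg hCβ hCR hf hξ hx

lemma Kop_integrand_le (hCβ : 0 ≤ Cβ) (hCδ : 0 ≤ Cδ) (hCR : 0 < CR) {c : ℝ}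
    (hf : ∀ y, 0 < y → f y ∈ Icc 0 c) (hξ : 0 < ξ) {x : ℝ} (hx : max ξ x₀ < x) :
    birthRate x₀ Cβ α x / energyGain CR α x *
        exp (-∫ τ in ξ..x, hazardRate x₀ Cβ Cδ CR α τ) * f (x - x₀) ≤
      Cβ / CR * c * (max ξ x₀ ^ ((Cβ + Cδ) / CR) * x ^ (-((Cβ + Cδ) / CR + 1))) := by
  set s := (Cβ + Cδ) / CR
  have hx0 : 0 < x := (lt_max_of_lt_left hξ).trans hx
  have hx₀x : x₀ < x := (le_max_right _ _).trans_lt hx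
  have hfx := hf _ (sub_pos.2 hx₀x)
  calc birthRate x₀ Cβ α x / energyGain CR α x *
        exp (-∫ τ in ξ..x, hazardRate x₀ Cβ Cδ CR α τ) * f (x - x₀)
      = Cβ / CR * x⁻¹ * exp (-∫ τ in ξ..x, hazardRate x₀ Cβ Cδ CR α τ) * f (x - x₀) := by
        rw [birthRate_div_energyGain_of_lt hx0 hx₀x hCR.ne']
    _ ≤ Cβ / CR * x⁻¹ * (max ξ x₀ ^ s * x ^ (-s)) * c := by
        gcongr
        · exact hfx.1
        · exact exp_neg_integral_hazardRate_le hCβ hCδ hCR hξ hx.le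
        · exact hfx.2
    _ = Cβ / CR * c * (max ξ x₀ ^ s * x ^ (-(s + 1))) := by
        rw [show -(s + 1) = -s + -1 by ring, rpow_add hx0, rpow_neg_one]
        ring

lemma Kop_le_mul (hCβ : 0 ≤ Cβ) (hCδ : 0 < Cδ) (hCR : 0 < CR) {c : ℝ}
    (hf : ∀ y, 0 < y → f y ∈ Icc 0 c) (hξ : 0 < ξ) :
    Kop x₀ Cβ Cδ CR α f ξ ≤ Cβ / (Cβ + Cδ) * c := by
  set m := max ξ x₀
  set s := (Cβ + Cδ) / CR
  have hm : 0 < m := lt_max_of_lt_left hξ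
  have hs : 0 < s := by positivity
  set F := (Ioi m).indicator fun x => Cβ / CR * c * (m ^ s * x ^ (-(s + 1)))
  have hF : IntegrableOn F (Ioi ξ) :=
    ((integrable_indicator_iff measurableSet_Ioi).2
      (((integrableOn_Ioi_rpow_of_lt (by linarith) hm).const_mul _).const_mul _)).integrableOn
  calc Kop x₀ Cβ Cδ CR α f ξ ≤ ∫ x in Ioi ξ, F x := by
        refine integral_mono_of_nonneg
          ((ae_restrict_iff' measurableSet_Ioi).2 (.of_forall fun x hx => ?_)) hF
          ((ae_restrict_iff' measurableSet_Ioi).2 (.of_forall fun x hx => ?_))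
        · exact Kop_integrand_nonneg hCβ hCR.le (fun y hy => (hf y hy).1) hξ hx
        · dsimp only [F]
          rcases le_or_gt x m with hxm | hmx
          · rw [birthRate_of_le ((le_max_iff.1 hxm).resolve_left (not_le.2 hx)),
              indicator_of_notMem (notMem_Ioi.2 hxm)]
            simp
          · rw [indicator_of_mem (mem_Ioi.2 hmx)]
            exact Kop_integrand_le hCβ hCδ.le hCR hf hξ hmx
    _ = Cβ / CR * c * s⁻¹ := by
        rw [setIntegral_indicator measurableSet_Ioi, Ioi_inter_Ioi, max_eq_right (le_max_left ξ x₀),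
          integral_const_mul, integral_Ioi_rpow_mul_rpow_neg_add_one hm hs]
    _ = Cβ / (Cβ + Cδ) * c := by
        simp only [s]
        field_simp

lemma iterate_Kop_one_mem_Icc (hCβ : 0 ≤ Cβ) (hCδ : 0 < Cδ) (hCR : 0 < CR) (k : ℕ)
    (hξ : 0 < ξ) :
    (Kop x₀ Cβ Cδ CR α)^[k] (fun _ => 1) ξ ∈ Icc 0 ((Cβ / (Cβ + Cδ)) ^ k) := by
  induction k generalizing ξ with
  | zero => simp
  | succ k ih =>
    rw [Function.iterate_succ_apply', pow_succ']
    exact ⟨Kop_nonneg hCβ hCR.le (fun _ hy => (ih hy).1) hξ, Kop_le_mul hCβ hCδ hCR (fun _ hy => ih hy) hξ⟩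

end Allometric

theorem stmt12_general (α x₀ Cβ Cδ CR : ℝ)
    (hCβ : 0 < Cβ) (hCδ : 0 < Cδ) (hCR : 0 < CR) :
    ∀ k : ℕ, 1 ≤ k → ∀ ξ : ℝ, 0 < ξ →
      (Kop x₀ Cβ Cδ CR α)^[k] (fun _ => 1) ξ ≤ (Cβ / (Cβ + Cδ)) ^ k :=
  fun k _ _ hξ => (iterate_Kop_one_mem_Icc hCβ.le hCδ hCR k hξ).2

/-- Lemma 6.18, first part: for every `k ≥ 1` and every `ξ > 0`,
`K^k 𝟏(ξ) ≤ (C_β/(C_β+C_δ))^k`. -/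
theorem stmt12 (α x₀ Cβ Cδ CR : ℝ)
    (hα0 : 0 < α) (hα1 : α ≤ 1) (hx₀ : 0 < x₀)
    (hCβ : 0 < Cβ) (hCδ : 0 < Cδ) (hCR : 0 < CR) :
    ∀ k : ℕ, 1 ≤ k → ∀ ξ : ℝ, 0 < ξ →
      (Kop x₀ Cβ Cδ CR α)^[k] (fun _ => 1) ξ ≤ (Cβ / (Cβ + Cδ)) ^ k :=
  stmt12_general α x₀ Cβ Cδ CR hCβ hCδ hCR
end

section
/- Let C_β, C_δ, C_R be positive reals with C_β > (e−1)·C_δ and C_β + C_δ < C_R. Then ∑_{k=1}^{∞} (C_β/(C_β+C_δ))^{k} · k^{−(C_β+C_δ)/C_R} > 1. -/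
/-!
Compare termwise with the logarithmic series: since `(k + 1) ^ (-s) ≥ (k + 1)⁻¹` for `s ≤ 1`,
the series dominates `∑ r ^ (k + 1) / (k + 1) = -log (1 - r)` with `r = C_β / (C_β + C_δ)`, and
`-log (1 - r) = log ((C_β + C_δ) / C_δ) > 1` exactly when `C_β > (e - 1) C_δ`.
-/

open Real

lemma summable_pow_succ_mul_rpow_neg {r s : ℝ} (hr0 : 0 ≤ r) (hr1 : r < 1) (hs : 0 ≤ s) :
    Summable fun n : ℕ => r ^ (n + 1) * ((n : ℝ) + 1) ^ (-s) := by
  refine .of_nonneg_of_le (fun n => by positivity) (fun n => ?_)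
    ((summable_geometric_of_lt_one hr0 hr1).mul_left r)
  calc r ^ (n + 1) * ((n : ℝ) + 1) ^ (-s) ≤ r ^ (n + 1) * 1 := by
        gcongr
        exact rpow_le_one_of_one_le_of_nonpos (by linarith [n.cast_nonneg (α := ℝ)]) (by linarith)
    _ = r * r ^ n := by ring

lemma neg_log_one_sub_le_tsum_pow_succ_mul_rpow_neg {r s : ℝ} (hr0 : 0 ≤ r) (hr1 : r < 1)
    (hs0 : 0 ≤ s) (hs1 : s ≤ 1) :
    -log (1 - r) ≤ ∑' n : ℕ, r ^ (n + 1) * ((n : ℝ) + 1) ^ (-s) := by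
  have hlog : HasSum (fun n : ℕ => r ^ (n + 1) / (n + 1)) (-log (1 - r)) :=
    hasSum_pow_div_log_of_abs_lt_one (by rwa [abs_of_nonneg hr0])
  rw [← hlog.tsum_eq]
  refine hlog.summable.tsum_le_tsum (fun n => ?_) (summable_pow_succ_mul_rpow_neg hr0 hr1 hs0)
  have hn : (1 : ℝ) ≤ n + 1 := by linarith [n.cast_nonneg (α := ℝ)]
  rw [div_eq_mul_inv, ← rpow_neg_one]
  gcongr

lemma one_lt_log_add_div_self {a b : ℝ} (hb : 0 < b) (h : (exp 1 - 1) * b < a) :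
    1 < log ((a + b) / b) := by
  have hab : 0 < a + b := by nlinarith [add_one_le_exp 1]
  rw [lt_log_iff_exp_lt (div_pos hab hb), lt_div_iff₀ hb]
  linarith

theorem stmt15_general (Cβ Cδ CR : ℝ)
    (hCδ : 0 < Cδ)
    (h1 : (Real.exp 1 - 1) * Cδ < Cβ) (h2 : Cβ + Cδ < CR) :
    1 < ∑' k : ℕ, (Cβ / (Cβ + Cδ)) ^ (k + 1) *
      ((k : ℝ) + 1) ^ (-((Cβ + Cδ) / CR)) := by
  have hCβ : 0 < Cβ := by nlinarith [add_one_le_exp 1]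
  have hsum : 0 < Cβ + Cδ := by linarith
  have hCR : 0 < CR := by linarith
  have h1r : 1 - Cβ / (Cβ + Cδ) = ((Cβ + Cδ) / Cδ)⁻¹ := by
    field_simp
    ring
  calc 1 < log ((Cβ + Cδ) / Cδ) := one_lt_log_add_div_self hCδ h1
    _ = -log (1 - Cβ / (Cβ + Cδ)) := by rw [h1r, log_inv, neg_neg]
    _ ≤ _ := neg_log_one_sub_le_tsum_pow_succ_mul_rpow_neg (by positivity)
        ((div_lt_one hsum).2 (by linarith)) (by positivity) ((div_le_one hCR).2 h2.le)

/-- Proof of Proposition 6.19: if `C_β > (e−1)C_δ` and `C_β + C_δ < C_R`, then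
`∑_{k=1}^∞ (C_β/(C_β+C_δ))^k k^{−(C_β+C_δ)/C_R} > 1`. -/
theorem stmt15 (Cβ Cδ CR : ℝ)
    (hCβ : 0 < Cβ) (hCδ : 0 < Cδ) (hCR : 0 < CR)
    (h1 : (Real.exp 1 - 1) * Cδ < Cβ) (h2 : Cβ + Cδ < CR) :
    1 < ∑' k : ℕ, (Cβ / (Cβ + Cδ)) ^ (k + 1) *
      ((k : ℝ) + 1) ^ (-((Cβ + Cδ) / CR)) :=
  stmt15_general Cβ Cδ CR hCδ h1 h2
end

section
/- Let x₁ > 0, let b, d, G : [x₁,∞) → (0,∞) be continuous with y ↦ d(y)/b(y) non-increasing, and let B : [x₁,∞) → [x₁,∞) be differentiable with B(y) ≥ y for all y ≥ x₁. If the function y ↦ ∫_y^{B(y)} b(u)/G(u) du is constant on [x₁,∞), then the function y ↦ ∫_y^{B(y)} d(u)/G(u) du is non-increasing on [x₁,∞). -/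
open MeasureTheory intervalIntegral Set

/-!
Write `d/G = r · w` with `r = d/b` non-increasing and `w = b/G > 0`. Constancy of `∫_y^{B y} w`
says that the window `[y, B y]` carries the same `w`-mass for every `y`, and positivity of `w`
makes `B` monotone. Sliding the window from `[x, B x]` to `[y, B y]` (`x ≤ y`) exchanges mass on
`[x, y]` for equal mass on `[B x, B y]`, which lies to the right of it; since `r` is
non-increasing, the `r · w`-integral can only decrease.
-/

theorem MeasureTheory.IntegrableOn.intervalIntegrable_of_mem_Icc {f : ℝ → ℝ} {a b s t : ℝ}
    (hf : IntegrableOn f (Icc a b)) (hs : s ∈ Icc a b) (ht : t ∈ Icc a b) :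
    IntervalIntegrable f volume s t :=
  (hf.mono_set (uIcc_subset_Icc hs ht)).intervalIntegrable

section WindowComparison

variable {r w : ℝ → ℝ} {a a' c c' : ℝ}

/-- The number `r a'` separates the values of `r` on the two windows. -/
theorem integral_mul_le_of_integral_eq_of_le (ha : a ≤ a') (hac : a' ≤ c) (hc : c ≤ c')
    (hr : AntitoneOn r (Icc a c')) (hw : ∀ u ∈ Icc a c', 0 ≤ w u)
    (hwi : IntegrableOn w (Icc a c')) (hrwi : IntegrableOn (fun u => r u * w u) (Icc a c'))
    (hmass : ∫ u in a..a', w u = ∫ u in c..c', w u) :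
    ∫ u in c..c', r u * w u ≤ ∫ u in a..a', r u * w u := by
  have ha'_mem : a' ∈ Icc a c' := ⟨ha, hac.trans hc⟩
  have hc_mem : c ∈ Icc a c' := ⟨ha.trans hac, hc⟩
  have ha_mem : a ∈ Icc a c' := ⟨le_rfl, ha.trans ha'_mem.2⟩
  have hc'_mem : c' ∈ Icc a c' := ⟨hc_mem.1.trans hc, le_rfl⟩
  calc ∫ u in c..c', r u * w u
      ≤ ∫ u in c..c', r a' * w u :=
        integral_mono_on hc (hrwi.intervalIntegrable_of_mem_Icc hc_mem hc'_mem)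
          ((hwi.intervalIntegrable_of_mem_Icc hc_mem hc'_mem).const_mul _) fun u hu =>
            have hu' : u ∈ Icc a c' := ⟨hc_mem.1.trans hu.1, hu.2⟩
            mul_le_mul_of_nonneg_right (hr ha'_mem hu' (hac.trans hu.1)) (hw u hu')
    _ = ∫ u in a..a', r a' * w u := by simp only [intervalIntegral.integral_const_mul, hmass]
    _ ≤ ∫ u in a..a', r u * w u :=
        integral_mono_on ha ((hwi.intervalIntegrable_of_mem_Icc ha_mem ha'_mem).const_mul _)
          (hrwi.intervalIntegrable_of_mem_Icc ha_mem ha'_mem) fun u hu =>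
            have hu' : u ∈ Icc a c' := ⟨hu.1, hu.2.trans ha'_mem.2⟩
            mul_le_mul_of_nonneg_right (hr hu' ha'_mem hu.2) (hw u hu')

/-- If the windows overlap, the common part `[c, a']` cancels and the previous lemma applies to
`[a, c]` and `[a', c']`. -/
theorem integral_mul_le_of_integral_eq (hac : a ≤ c) (ha : a ≤ a') (hc : c ≤ c')
    (hac' : a' ≤ c')
    (hr : AntitoneOn r (Icc a c')) (hw : ∀ u ∈ Icc a c', 0 ≤ w u)
    (hwi : IntegrableOn w (Icc a c')) (hrwi : IntegrableOn (fun u => r u * w u) (Icc a c'))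
    (hmass : ∫ u in a..a', w u = ∫ u in c..c', w u) :
    ∫ u in c..c', r u * w u ≤ ∫ u in a..a', r u * w u := by
  rcases le_total a' c with hsep | hoverlap
  · exact integral_mul_le_of_integral_eq_of_le ha hsep hc hr hw hwi hrwi hmass
  have ha_mem : a ∈ Icc a c' := ⟨le_rfl, hac.trans hc⟩
  have hc_mem : c ∈ Icc a c' := ⟨hac, hc⟩
  have ha'_mem : a' ∈ Icc a c' := ⟨ha, hac'⟩
  have hc'_mem : c' ∈ Icc a c' := ⟨hac.trans hc, le_rfl⟩
  have hsplit {f : ℝ → ℝ} (hf : IntegrableOn f (Icc a c') volume) :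
      (∫ u in a..c, f u) + ∫ u in c..a', f u = ∫ u in a..a', f u ∧
      (∫ u in c..a', f u) + ∫ u in a'..c', f u = ∫ u in c..c', f u :=
    ⟨integral_add_adjacent_intervals (hf.intervalIntegrable_of_mem_Icc ha_mem hc_mem)
        (hf.intervalIntegrable_of_mem_Icc hc_mem ha'_mem),
      integral_add_adjacent_intervals (hf.intervalIntegrable_of_mem_Icc hc_mem ha'_mem)
        (hf.intervalIntegrable_of_mem_Icc ha'_mem hc'_mem)⟩
  obtain ⟨hw₁, hw₂⟩ := hsplit hwi
  obtain ⟨hrw₁, hrw₂⟩ := hsplit hrwi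
  have key :=
    integral_mul_le_of_integral_eq_of_le hac hoverlap hac' hr hw hwi hrwi (by linarith)
  linarith

end WindowComparison

theorem le_of_integral_le_integral_of_pos {w : ℝ → ℝ} {y s t : ℝ}
    (hys : y ≤ s) (hyt : y ≤ t) (hw : ∀ u ∈ Icc y (max s t), 0 < w u)
    (hwi : IntegrableOn w (Icc y (max s t))) (h : ∫ u in y..s, w u ≤ ∫ u in y..t, w u) : s ≤ t := by
  by_contra! hts
  have hy_mem : y ∈ Icc y (max s t) := ⟨le_rfl, hys.trans (le_max_left s t)⟩
  have ht_mem : t ∈ Icc y (max s t) := ⟨hyt, le_max_right s t⟩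
  have hs_mem : s ∈ Icc y (max s t) := ⟨hys, le_max_left s t⟩
  have hpos : 0 < ∫ u in t..s, w u :=
    intervalIntegral_pos_of_pos_on (hwi.intervalIntegrable_of_mem_Icc ht_mem hs_mem)
      (fun u hu => hw u ⟨hyt.trans hu.1.le, hu.2.le.trans (le_max_left s t)⟩) hts
  have hsplit := integral_add_adjacent_intervals
    (hwi.intervalIntegrable_of_mem_Icc hy_mem ht_mem)
    (hwi.intervalIntegrable_of_mem_Icc ht_mem hs_mem)
  linarith

theorem antitoneOn_integral_mul_of_integral_eq_const {x₀ c : ℝ} {r w B : ℝ → ℝ}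
    (hr : AntitoneOn r (Ici x₀)) (hrc : ContinuousOn r (Ici x₀))
    (hwc : ContinuousOn w (Ici x₀)) (hw : ∀ u ∈ Ici x₀, 0 < w u)
    (hB : ∀ y ∈ Ici x₀, y ≤ B y) (hconst : ∀ y ∈ Ici x₀, ∫ u in y..B y, w u = c) :
    AntitoneOn (fun y => ∫ u in y..B y, r u * w u) (Ici x₀) := by
  intro x hx y hy hxy
  have hsub (t : ℝ) : Icc x t ⊆ Ici x₀ := fun u hu => mem_Ici.2 (hx.trans hu.1)
  have hint {f : ℝ → ℝ} (hf : ContinuousOn f (Ici x₀)) (t : ℝ) : IntegrableOn f (Icc x t) :=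
    (hf.mono (hsub t)).integrableOn_Icc
  have hBy : x ≤ B y := hxy.trans (hB y hy)
  have hmass : ∫ u in x..B x, w u ≤ ∫ u in x..B y, w u := by
    have hsplit := integral_add_adjacent_intervals
      ((hint hwc (B y)).intervalIntegrable_of_mem_Icc ⟨le_rfl, hBy⟩ ⟨hxy, hB y hy⟩)
      ((hint hwc (B y)).intervalIntegrable_of_mem_Icc ⟨hxy, hB y hy⟩ ⟨hBy, le_rfl⟩)
    have hnonneg : 0 ≤ ∫ u in x..y, w u :=
      integral_nonneg hxy fun u hu => (hw u (hsub y hu)).le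
    linarith [hconst x hx, hconst y hy]
  have hBxy : B x ≤ B y := le_of_integral_le_integral_of_pos (hB x hx) hBy
    (fun u hu => hw u (hsub _ hu)) (hint hwc _) hmass
  exact integral_mul_le_of_integral_eq hxy (hB x hx) (hB y hy) hBxy
    (hr.mono (hsub _)) (fun u hu => (hw u (hsub _ hu)).le) (hint hwc _)
    (hint (hrc.mul hwc) _) ((hconst x hx).trans (hconst y hy).symm)

theorem stmt17_general (x₁ : ℝ) (b d G B : ℝ → ℝ)
    (hbcont : ContinuousOn b (Set.Ici x₁))
    (hdcont : ContinuousOn d (Set.Ici x₁))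
    (hGcont : ContinuousOn G (Set.Ici x₁))
    (hbpos : ∀ y ∈ Set.Ici x₁, 0 < b y)
    (hGpos : ∀ y ∈ Set.Ici x₁, 0 < G y)
    (hratio : AntitoneOn (fun y => d y / b y) (Set.Ici x₁))
    (hBge : ∀ y ∈ Set.Ici x₁, y ≤ B y)
    (hconst : ∃ c : ℝ, ∀ y ∈ Set.Ici x₁, (∫ u in y..(B y), b u / G u) = c) :
    AntitoneOn (fun y => ∫ u in y..(B y), d u / G u) (Set.Ici x₁) := by
  obtain ⟨c, hc⟩ := hconst
  have hb0 (u : ℝ) (hu : u ∈ Ici x₁) : b u ≠ 0 := (hbpos u hu).ne'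
  have hG0 (u : ℝ) (hu : u ∈ Ici x₁) : G u ≠ 0 := (hGpos u hu).ne'
  have hfactor : EqOn (fun y => ∫ u in y..B y, d u / b u * (b u / G u))
      (fun y => ∫ u in y..B y, d u / G u) (Ici x₁) := fun y hy =>
    integral_congr fun u hu => by
      have hu' : u ∈ Ici x₁ := mem_Ici.2 (le_trans hy (uIcc_of_le (hBge y hy) ▸ hu).1)
      field_simp [hb0 u hu', hG0 u hu']
  exact (antitoneOn_integral_mul_of_integral_eq_const hratio (hdcont.div hbcont hb0)
    (hbcont.div hGcont hG0) (fun u hu => div_pos (hbpos u hu) (hGpos u hu)) hBge hc).congr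
    hfactor

/-- Deterministic monotonicity underlying Step 3 of the coupling Lemma 6.10: if
`d/b` is non-increasing, `B(y) ≥ y`, and `y ↦ ∫_y^{B(y)} b/G` is constant on `[x₁,∞)`,
then `y ↦ ∫_y^{B(y)} d/G` is non-increasing on `[x₁,∞)`. -/
theorem stmt17 (x₁ : ℝ) (hx₁ : 0 < x₁) (b d G B : ℝ → ℝ)
    (hbcont : ContinuousOn b (Set.Ici x₁))
    (hdcont : ContinuousOn d (Set.Ici x₁))
    (hGcont : ContinuousOn G (Set.Ici x₁))
    (hbpos : ∀ y ∈ Set.Ici x₁, 0 < b y)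
    (hdpos : ∀ y ∈ Set.Ici x₁, 0 < d y)
    (hGpos : ∀ y ∈ Set.Ici x₁, 0 < G y)
    (hratio : AntitoneOn (fun y => d y / b y) (Set.Ici x₁))
    (hBdiff : DifferentiableOn ℝ B (Set.Ici x₁))
    (hBge : ∀ y ∈ Set.Ici x₁, y ≤ B y)
    (hconst : ∃ c : ℝ, ∀ y ∈ Set.Ici x₁, (∫ u in y..(B y), b u / G u) = c) :
    AntitoneOn (fun y => ∫ u in y..(B y), d u / G u) (Set.Ici x₁) :=
  stmt17_general x₁ b d G B hbcont hdcont hGcont hbpos hGpos hratio hBge hconst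
end

section
/- Let α, β, δ be reals and C_β, C_δ, C_R, x positive reals, and assume β ≥ δ and β + δ < 2(α−1). Then the function u ↦ ( ∫_x^{u} (C_β·s^{β})/(C_R·s^{α}) ds ) · (C_δ·u^{δ})/(C_R·u^{α}) is integrable on (x, +∞), i.e. ∫_x^{∞} ( ∫_x^{u} C_β s^{β−α}/C_R ds ) · (C_δ u^{δ−α}/C_R) du < +∞. -/
open MeasureTheory

/-- Allometric computation in Proposition 6.13: if `β ≥ δ` and `β + δ < 2(α−1)`, then
`u ↦ (∫_x^u b̃/g)·(d(u)/g(u))` is integrable on `(x, +∞)`. -/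
theorem stmt19 (α β δ Cβ Cδ CR x : ℝ)
    (hCβ : 0 < Cβ) (hCδ : 0 < Cδ) (hCR : 0 < CR) (hx : 0 < x)
    (hβδ : δ ≤ β) (hsum : β + δ < 2 * (α - 1)) :
    IntegrableOn
      (fun u : ℝ =>
        (∫ s in x..u, Cβ * s ^ β / (CR * s ^ α)) * (Cδ * u ^ δ / (CR * u ^ α)))
      (Set.Ioi x) := by
  have hδα : δ < α - 1 := by linarith
  set γ : ℝ := max (β - α) ((α - δ - 3) / 2) with hγdef
  have hγ1 : -1 < γ := lt_max_of_lt_right (by linarith)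
  have hγ2 : γ < α - δ - 2 := max_lt (by linarith) (by linarith)
  have hγ3 : β - α ≤ γ := le_max_left _ _
  set p : ℝ := γ + 1 + δ - α with hpdef
  have hp : p < -1 := by simp only [hpdef]; linarith
  -- continuity of the generic power quotient
  have hcont : ∀ (c₁ c₂ e₁ e₂ : ℝ), 0 < c₂ →
      ContinuousOn (fun s : ℝ => c₁ * s ^ e₁ / (c₂ * s ^ e₂)) (Set.Ioi 0) := by
    intro c₁ c₂ e₁ e₂ hc₂ s hs
    have hs0 : (s : ℝ) ≠ 0 := ne_of_gt hs
    have hse : (0 : ℝ) < s ^ e₂ := Real.rpow_pos_of_pos hs e₂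
    exact ContinuousAt.continuousWithinAt
      (((continuousAt_const.mul (Real.continuousAt_rpow_const s e₁ (Or.inl hs0))).div
        (continuousAt_const.mul (Real.continuousAt_rpow_const s e₂ (Or.inl hs0)))
        (by positivity)))
  have hIcc_sub : ∀ b : ℝ, x ≤ b → Set.Icc x b ⊆ Set.Ioi (0 : ℝ) :=
    fun b _ s hs => lt_of_lt_of_le hx hs.1
  have hint : ∀ b : ℝ, x ≤ b →
      IntervalIntegrable (fun s : ℝ => Cβ * s ^ β / (CR * s ^ α)) volume x b := by
    intro b hb
    refine ContinuousOn.intervalIntegrable ((hcont Cβ CR β α hCR).mono ?_)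
    rw [Set.uIcc_of_le hb]; exact hIcc_sub b hb
  have hintγ : ∀ b : ℝ, x ≤ b →
      IntervalIntegrable (fun s : ℝ => Cβ / CR * x ^ (β - α - γ) * s ^ γ) volume x b := by
    intro b hb
    refine ContinuousOn.intervalIntegrable ?_
    refine ContinuousOn.mono (s := Set.Ioi (0:ℝ)) ?_ (by rw [Set.uIcc_of_le hb]; exact hIcc_sub b hb)
    intro s hs
    exact ContinuousAt.continuousWithinAt
      (continuousAt_const.mul (Real.continuousAt_rpow_const s γ (Or.inl (ne_of_gt hs))))
  -- measurability via continuity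
  set F : ℝ → ℝ := fun u => ∫ s in x..u, Cβ * s ^ β / (CR * s ^ α) with hFdef
  have hFcont : ContinuousOn F (Set.Ioi x) := by
    intro u hu
    have h1 : ContinuousWithinAt F (Set.Icc x (u + 1)) u := by
      refine intervalIntegral.continuousWithinAt_primitive (measure_singleton u) ?_
      rw [min_self, max_eq_right (by linarith [Set.mem_Ioi.mp hu])]
      exact hint (u + 1) (by linarith [Set.mem_Ioi.mp hu])
    exact (h1.continuousAt (Icc_mem_nhds hu (by linarith [Set.mem_Ioi.mp hu]))).continuousWithinAt
  have hGcont : ContinuousOn (fun u : ℝ => Cδ * u ^ δ / (CR * u ^ α)) (Set.Ioi x) :=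
    (hcont Cδ CR δ α hCR).mono (fun u hu => lt_trans hx hu)
  have hmeas : AEStronglyMeasurable
      (fun u : ℝ => F u * (Cδ * u ^ δ / (CR * u ^ α)))
      (volume.restrict (Set.Ioi x)) :=
    (hFcont.mul hGcont).aestronglyMeasurable measurableSet_Ioi
  -- the dominating function
  set A : ℝ := Cβ / CR * x ^ (β - α - γ) / (γ + 1) with hAdef
  set K : ℝ := A * (Cδ / CR) with hKdef
  have hgint : IntegrableOn (fun u : ℝ => K * u ^ p) (Set.Ioi x) :=
    (integrableOn_Ioi_rpow_of_lt hp hx).const_mul K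
  refine Integrable.mono' hgint hmeas ?_
  filter_upwards [ae_restrict_mem measurableSet_Ioi] with u hu
  have hxu : x < u := hu
  have hu0 : (0 : ℝ) < u := lt_trans hx hxu
  -- nonnegativity
  have hF0 : 0 ≤ F u := by
    refine intervalIntegral.integral_nonneg hxu.le (fun s hs => ?_)
    have hs0 : (0 : ℝ) < s := lt_of_lt_of_le hx hs.1
    positivity
  have hG0 : 0 ≤ Cδ * u ^ δ / (CR * u ^ α) := by positivity
  rw [Real.norm_of_nonneg (mul_nonneg hF0 hG0)]
  -- bound the inner integral
  have hstep : ∀ s ∈ Set.Icc x u,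
      Cβ * s ^ β / (CR * s ^ α) ≤ Cβ / CR * x ^ (β - α - γ) * s ^ γ := by
    intro s hs
    have hs0 : (0 : ℝ) < s := lt_of_lt_of_le hx hs.1
    have h1 : Cβ * s ^ β / (CR * s ^ α) = Cβ / CR * s ^ (β - α) := by
      rw [Real.rpow_sub hs0]
      field_simp
    have h2 : s ^ (β - α) = s ^ (β - α - γ) * s ^ γ := by
      rw [← Real.rpow_add hs0]; ring_nf
    have h3 : s ^ (β - α - γ) ≤ x ^ (β - α - γ) :=
      Real.rpow_le_rpow_of_nonpos hx hs.1 (by linarith)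
    calc Cβ * s ^ β / (CR * s ^ α) = Cβ / CR * (s ^ (β - α - γ) * s ^ γ) := by rw [h1, h2]
      _ ≤ Cβ / CR * (x ^ (β - α - γ) * s ^ γ) := by
          refine mul_le_mul_of_nonneg_left ?_ (by positivity)
          exact mul_le_mul_of_nonneg_right h3 (Real.rpow_nonneg hs0.le γ)
      _ = Cβ / CR * x ^ (β - α - γ) * s ^ γ := by ring
  have hFle : F u ≤ A * u ^ (γ + 1) := by
    have h1 : F u ≤ ∫ s in x..u, Cβ / CR * x ^ (β - α - γ) * s ^ γ :=
      intervalIntegral.integral_mono_on hxu.le (hint u hxu.le) (hintγ u hxu.le) hstep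
    have h2 : ∫ s in x..u, Cβ / CR * x ^ (β - α - γ) * s ^ γ
        = Cβ / CR * x ^ (β - α - γ) * ((u ^ (γ + 1) - x ^ (γ + 1)) / (γ + 1)) := by
      rw [intervalIntegral.integral_const_mul, integral_rpow (Or.inl hγ1)]
    have hγp : (0 : ℝ) < γ + 1 := by linarith
    have hxp : (0 : ℝ) ≤ x ^ (γ + 1) := Real.rpow_nonneg hx.le _
    have hc0 : (0 : ℝ) ≤ Cβ / CR * x ^ (β - α - γ) := by positivity
    have key : (u ^ (γ + 1) - x ^ (γ + 1)) / (γ + 1) ≤ u ^ (γ + 1) / (γ + 1) :=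
      (div_le_div_iff_of_pos_right hγp).mpr (by linarith)
    calc F u ≤ Cβ / CR * x ^ (β - α - γ) * ((u ^ (γ + 1) - x ^ (γ + 1)) / (γ + 1)) :=
          h1.trans_eq h2
      _ ≤ Cβ / CR * x ^ (β - α - γ) * (u ^ (γ + 1) / (γ + 1)) :=
          mul_le_mul_of_nonneg_left key hc0
      _ = A * u ^ (γ + 1) := by rw [hAdef]; ring
  have hGeq : Cδ * u ^ δ / (CR * u ^ α) = Cδ / CR * u ^ (δ - α) := by
    rw [Real.rpow_sub hu0]
    field_simp
  calc F u * (Cδ * u ^ δ / (CR * u ^ α))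
      ≤ (A * u ^ (γ + 1)) * (Cδ * u ^ δ / (CR * u ^ α)) :=
        mul_le_mul_of_nonneg_right hFle hG0
    _ = A * (Cδ / CR) * (u ^ (γ + 1) * u ^ (δ - α)) := by rw [hGeq]; ring
    _ = K * u ^ p := by
        rw [← Real.rpow_add hu0, hKdef, show γ + 1 + (δ - α) = p by rw [hpdef]; ring]
end
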